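/- arXiv:2504.17708 — 7 statements merged into one kernel-verified Lean document; each statement's English description precedes it below -/
import Mathlib

section
/- Let G be a graph, r ≥ 2, and suppose G contains K_{r,r} as a subgraph with parts A and B. Then G has a feedback vertex set of size at most k if and only if there exists a set X of r−1 vertices with X ⊆ A or X ⊆ B such that G − X has a feedback vertex set of size at most k−(r−1). -/
open SimpleGraph Finset

/-- `S` is a feedback vertex set of `G`: removing `S` leaves an acyclic graph. -/
def IsFVS {V : Type*} (G : SimpleGraph V) (S : Set V) : Prop :=
  (G.induce Sᶜ).IsAcyclic

/-!
A forest contains no 4-cycle, so a feedback vertex set `S` must leave at most one vertex of one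
side of the biclique `K_{r,r}` on parts `A` and `B` uncovered. Hence `S` contains a set `X` of
`r - 1` vertices of `A` or of `B`, and `S \ X` is the required smaller feedback vertex set of
`G - X`. The converse is immediate, since `X ∪ S'` is itself a feedback vertex set of size `≤ k`.
-/

theorem SimpleGraph.IsAcyclic.eq_of_adj_of_adj {V : Type*} {G : SimpleGraph V} (hG : G.IsAcyclic)
    {a₁ a₂ b₁ b₂ : V} (ha : a₁ ≠ a₂) (h₁₁ : G.Adj a₁ b₁) (h₂₁ : G.Adj a₂ b₁)
    (h₁₂ : G.Adj a₁ b₂) (h₂₂ : G.Adj a₂ b₂) : b₁ = b₂ := by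
  have := (hG.subsingleton_path a₁ a₂).elim
    ⟨.cons h₁₁ (.cons h₂₁.symm .nil), by simp [Walk.isPath_def, ha, h₁₁.ne, h₂₁.ne']⟩
    ⟨.cons h₁₂ (.cons h₂₂.symm .nil), by simp [Walk.isPath_def, ha, h₁₂.ne, h₂₂.ne']⟩
  simp only [Subtype.mk.injEq, Walk.cons.injEq] at this
  exact this.1

theorem IsFVS.card_sdiff_le_one_or {V : Type*} [DecidableEq V] {G : SimpleGraph V}
    {S A B : Finset V} (hS : IsFVS G S) (hadj : ∀ a ∈ A, ∀ b ∈ B, G.Adj a b) :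
    #(A \ S) ≤ 1 ∨ #(B \ S) ≤ 1 := by
  by_contra! h
  obtain ⟨a₁, ha₁, a₂, ha₂, ha⟩ := one_lt_card.mp h.1
  obtain ⟨b₁, hb₁, b₂, hb₂, hb⟩ := one_lt_card.mp h.2
  simp only [mem_sdiff] at ha₁ ha₂ hb₁ hb₂
  let v (x : V) (hx : x ∉ S) : ((S : Set V)ᶜ : Set V) := ⟨x, by simpa using hx⟩
  refine hb (congrArg Subtype.val (hS.eq_of_adj_of_adj (a₁ := v a₁ ha₁.2) (a₂ := v a₂ ha₂.2)
    (b₁ := v b₁ hb₁.2) (b₂ := v b₂ hb₂.2) (by simpa [v] using ha) ?_ ?_ ?_ ?_)) <;>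
    simp [v, hadj _ ha₁.1, hadj _ ha₂.1, hb₁.1, hb₂.1]

theorem Finset.exists_subset_inter_card_eq_pred_of_card_sdiff_le_one {α : Type*} [DecidableEq α]
    {S A : Finset α} (h : #(A \ S) ≤ 1) : ∃ X ⊆ S, X ⊆ A ∧ #X = #A - 1 := by
  have hcard : #A - 1 ≤ #(A ∩ S) := by
    have := card_sdiff_add_card_inter A S
    omega
  obtain ⟨X, hXAS, hX⟩ := exists_subset_card_eq hcard
  exact ⟨X, hXAS.trans inter_subset_right, hXAS.trans inter_subset_left, hX⟩

theorem IsFVS.exists_subset_card_eq {V : Type*} [DecidableEq V] {G : SimpleGraph V} {r : ℕ}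
    {S A B : Finset V} (hS : IsFVS G S) (hA : #A = r) (hB : #B = r)
    (hadj : ∀ a ∈ A, ∀ b ∈ B, G.Adj a b) : ∃ X ⊆ S, #X = r - 1 ∧ (X ⊆ A ∨ X ⊆ B) := by
  rcases hS.card_sdiff_le_one_or hadj with h | h
  · obtain ⟨X, hXS, hXA, hX⟩ := exists_subset_inter_card_eq_pred_of_card_sdiff_le_one h
    exact ⟨X, hXS, hA ▸ hX, .inl hXA⟩
  · obtain ⟨X, hXS, hXB, hX⟩ := exists_subset_inter_card_eq_pred_of_card_sdiff_le_one h
    exact ⟨X, hXS, hB ▸ hX, .inr hXB⟩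

theorem stmt2_general {V : Type*} [DecidableEq V] (G : SimpleGraph V) (r k : ℕ)
    (A B : Finset V) (hA : A.card = r) (hB : B.card = r)
    (hadj : ∀ a ∈ A, ∀ b ∈ B, G.Adj a b) :
    (∃ S : Finset V, S.card ≤ k ∧ IsFVS G ↑S) ↔
      ∃ X : Finset V, X.card = r - 1 ∧ (X ⊆ A ∨ X ⊆ B) ∧
        ∃ S' : Finset V, Disjoint S' X ∧ S'.card + (r - 1) ≤ k ∧ IsFVS G ↑(X ∪ S') := by
  constructor
  · rintro ⟨S, hSk, hS⟩
    obtain ⟨X, hXS, hX, hXAB⟩ := hS.exists_subset_card_eq hA hB hadj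
    refine ⟨X, hX, hXAB, S \ X, sdiff_disjoint, ?_, by rwa [union_sdiff_of_subset hXS]⟩
    have := card_sdiff_of_subset hXS
    have := card_le_card hXS
    omega
  · rintro ⟨X, hX, -, S', -, hcard, hS⟩
    exact ⟨X ∪ S', by have := card_union_le X S'; omega, hS⟩

/-- If `G` contains `K_{r,r}` as a subgraph with parts `A` and `B` (`r ≥ 2`), then `G` has a
feedback vertex set of size at most `k` iff there is a set `X` of `r - 1` vertices with
`X ⊆ A` or `X ⊆ B` such that `G - X` has a feedback vertex set of size at most `k - (r-1)`. -/
theorem stmt2 {V : Type*} [DecidableEq V] (G : SimpleGraph V) (r k : ℕ) (hr : 2 ≤ r)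
    (A B : Finset V) (hA : A.card = r) (hB : B.card = r) (hAB : Disjoint A B)
    (hadj : ∀ a ∈ A, ∀ b ∈ B, G.Adj a b) :
    (∃ S : Finset V, S.card ≤ k ∧ IsFVS G ↑S) ↔
      ∃ X : Finset V, X.card = r - 1 ∧ (X ⊆ A ∨ X ⊆ B) ∧
        ∃ S' : Finset V, Disjoint S' X ∧ S'.card + (r - 1) ≤ k ∧ IsFVS G ↑(X ∪ S') :=
  stmt2_general G r k A B hA hB hadj
end

section
/- Let X be a finite set and let 𝒯 be a family of more than |X| subtrees (of some forest) such that each tree T ∈ 𝒯 is assigned the same neighborhood set N_M(T) = X. Then there exists a tree T ∈ 𝒯 that is redundant, i.e., for every x ∈ X with at least two neighbors in T, there exists another tree T' ∈ 𝒯, T' ≠ T, such that x has at least two neighbors in T'. -/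
open SimpleGraph Finset

/-- Given a family `𝒯` of more than `|X|` pairwise disjoint subtrees of `G - M`, all having
the same neighborhood `X` in `M`, there is a redundant tree `T ∈ 𝒯`: for every `x ∈ X`
having at least two neighbors in `T`, some other `T' ∈ 𝒯` also gives `x` at least two
neighbors. -/
theorem stmt3 {V : Type*} [DecidableEq V] (G : SimpleGraph V) [DecidableRel G.Adj]
    (M X : Finset V) (hX : X ⊆ M)
    (𝒯 : Finset (Finset V))
    (hTM : ∀ T ∈ 𝒯, Disjoint T M)
    (hconn : ∀ T ∈ 𝒯, (G.induce (T : Set V)).Connected)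
    (hdisj : ∀ T ∈ 𝒯, ∀ T' ∈ 𝒯, T ≠ T' → Disjoint T T')
    (hnbhd : ∀ T ∈ 𝒯, M.filter (fun x => ∃ v ∈ T, G.Adj x v) = X)
    (hcard : X.card + 1 ≤ 𝒯.card) :
    ∃ T ∈ 𝒯, ∀ x ∈ X, 2 ≤ (T.filter (fun v => G.Adj x v)).card →
      ∃ T' ∈ 𝒯, T' ≠ T ∧ 2 ≤ (T'.filter (fun v => G.Adj x v)).card := by
  by_contra h
  push_neg at h
  choose f hfX hf2 hfno using h
  have hmap : ∀ T ∈ 𝒯.attach, f T.1 T.2 ∈ X := fun T _ => hfX T.1 T.2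
  have hlt : X.card < 𝒯.attach.card := by
    rw [Finset.card_attach]; omega
  obtain ⟨T, hT, T', hT', hne, heq⟩ :=
    Finset.exists_ne_map_eq_of_card_lt_of_maps_to hlt hmap
  have hne' : T'.1 ≠ T.1 := fun e => hne (Subtype.ext e.symm)
  have h1 := hfno T.1 T.2 T'.1 T'.2 hne'
  have h2 := hf2 T'.1 T'.2
  rw [← heq] at h2
  omega
end

section
/- Let G be a graph, M ⊆ V(G) a feedback vertex set, X ⊆ M, and T₁, T₂ two vertex-disjoint connected subsets of V(G) − M each containing a neighbor of every vertex of X. If S is a feedback vertex set of G with S ∩ T₁ = ∅ and S ∩ T₂ = ∅, then |X \ S| ≤ 1. -/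
open SimpleGraph Finset

/-!
Suppose two distinct vertices `x, y` of `X` survive in `G - S`. Each of them has a neighbour in
`T₁` and in `T₂`, so joining them through `T₁` and through `T₂` gives two `x`–`y` walks in the
forest `G - S`. They contain the unique `x`–`y` path of `G - S`, so some edge of it has an
endpoint in `T₁` and lies on the walk through `T₂` — impossible, since that walk only visits
`x`, `y` and vertices of `T₂`, none of which is in `T₁`.
-/

namespace SimpleGraph

variable {V : Type*} {G : SimpleGraph V}

theorem Walk.edges_induce {s : Set V} {u v : V} (w : G.Walk u v) (hw : ∀ x ∈ w.support, x ∈ s) :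
    (w.induce s hw).edges.map (Sym2.map Subtype.val) = w.edges := by
  have h := congrArg Walk.edges (w.map_induce hw)
  rw [Walk.edges_map] at h
  exact h

theorem IsAcyclic.eq_of_forall_edge_mem_of_forall_support_notMem [DecidableEq V]
    (hG : G.IsAcyclic) {a b : V} (p q : G.Walk a b) (A : Set V)
    (hp : ∀ e ∈ p.edges, ∃ u ∈ e, u ∈ A) (hq : ∀ u ∈ q.support, u ∉ A) : a = b := by
  by_contra hab
  have hpath : p.bypass = q.bypass :=
    congrArg Subtype.val <|
      (hG.subsingleton_path a b).elim ⟨_, p.bypass_isPath⟩ ⟨_, q.bypass_isPath⟩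
  obtain ⟨e, he⟩ := List.exists_mem_of_ne_nil _
    (Walk.edges_eq_nil.not.mpr (Walk.not_nil_of_ne (p := p.bypass) hab))
  obtain ⟨u, hue, huA⟩ := hp e (p.edges_bypass_subset_edges he)
  rw [hpath] at he
  exact hq u (Walk.mem_support_iff_exists_mem_edges.mpr
    (Or.inr ⟨e, q.edges_bypass_subset_edges he, hue⟩)) huA

theorem Connected.exists_walk_through_induce {T : Set V} (hc : (G.induce T).Connected)
    {x y v w : V} (hv : v ∈ T) (hw : w ∈ T) (hxv : G.Adj x v) (hwy : G.Adj w y) :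
    ∃ W : G.Walk x y, (∀ u ∈ W.support, u = x ∨ u = y ∨ u ∈ T) ∧
      ∀ e ∈ W.edges, ∃ u ∈ e, u ∈ T := by
  obtain ⟨r', hr'⟩ : ∃ r' : G.Walk v w, ∀ u ∈ r'.support, u ∈ T := by
    obtain ⟨r⟩ := hc.preconnected ⟨v, hv⟩ ⟨w, hw⟩
    refine ⟨r.map (Embedding.induce T).toHom, fun u hu => ?_⟩
    -- `▸` rather than `rw`: the mapped walk has type `G.Walk v w` only up to unfolding.
    obtain ⟨u, -, rfl⟩ := List.mem_map.mp (Walk.support_map (Embedding.induce T).toHom r ▸ hu)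
    exact u.2
  refine ⟨.cons hxv (r'.concat hwy), ?_, ?_⟩
  · intro u hu
    simp only [Walk.support_cons, Walk.support_concat, List.mem_cons, List.mem_append,
      List.not_mem_nil, or_false] at hu
    rcases hu with rfl | hu | rfl
    exacts [Or.inl rfl, Or.inr (Or.inr (hr' u hu)), Or.inr (Or.inl rfl)]
  · intro e he
    simp only [Walk.edges_cons, Walk.edges_concat, List.concat_eq_append, List.mem_cons,
      List.mem_append, List.not_mem_nil, or_false] at he
    rcases he with rfl | he | rfl
    · exact ⟨v, Sym2.mem_mk_right x v, hv⟩
    · induction e using Sym2.ind with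
      | _ a b => exact ⟨a, Sym2.mem_mk_left a b, hr' a (r'.fst_mem_support_of_mem_edges he)⟩
    · exact ⟨w, Sym2.mem_mk_left w y, hw⟩

end SimpleGraph

theorem IsFVS.eq_of_forall_edge_mem_of_forall_support_notMem {V : Type*} [DecidableEq V]
    {G : SimpleGraph V} {S : Set V} (hS : IsFVS G S) {a b : V} (p q : G.Walk a b) (A : Set V)
    (hpS : ∀ u ∈ p.support, u ∈ Sᶜ) (hqS : ∀ u ∈ q.support, u ∈ Sᶜ)
    (hp : ∀ e ∈ p.edges, ∃ u ∈ e, u ∈ A) (hq : ∀ u ∈ q.support, u ∉ A) : a = b := by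
  have := IsAcyclic.eq_of_forall_edge_mem_of_forall_support_notMem hS
    (p.induce _ hpS) (q.induce _ hqS) (Subtype.val ⁻¹' A) ?_ ?_
  · exact congrArg Subtype.val this
  · intro e he
    obtain ⟨u, hu, huA⟩ := hp _ (p.edges_induce hpS ▸ List.mem_map_of_mem he)
    obtain ⟨u', hu', rfl⟩ := Sym2.mem_map.mp hu
    exact ⟨u', hu', huA⟩
  · intro u hu
    simp only [Walk.support_induce, List.mem_attachWith] at hu
    exact hq u hu

theorem stmt4_general {V : Type*} [DecidableEq V] (G : SimpleGraph V)
    (M : Finset V)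
    (X : Finset V) (hX : X ⊆ M)
    (T₁ T₂ : Finset V) (hT₁M : Disjoint T₁ M)
    (hdisj : Disjoint T₁ T₂)
    (hc₁ : (G.induce (T₁ : Set V)).Connected) (hc₂ : (G.induce (T₂ : Set V)).Connected)
    (hn₁ : ∀ x ∈ X, ∃ v ∈ T₁, G.Adj x v) (hn₂ : ∀ x ∈ X, ∃ v ∈ T₂, G.Adj x v)
    (S : Finset V) (hS : IsFVS G ↑S) (h1 : S ∩ T₁ = ∅) (h2 : S ∩ T₂ = ∅) :
    (X \ S).card ≤ 1 := by
  refine Finset.card_le_one.mpr fun x hx y hy => ?_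
  rw [Finset.mem_sdiff] at hx hy
  have hxyT₁ : x ∉ T₁ ∧ y ∉ T₁ :=
    ⟨Finset.disjoint_right.mp hT₁M (hX hx.1), Finset.disjoint_right.mp hT₁M (hX hy.1)⟩
  obtain ⟨v₁, hv₁, hxv₁⟩ := hn₁ x hx.1
  obtain ⟨w₁, hw₁, hyw₁⟩ := hn₁ y hy.1
  obtain ⟨v₂, hv₂, hxv₂⟩ := hn₂ x hx.1
  obtain ⟨w₂, hw₂, hyw₂⟩ := hn₂ y hy.1
  obtain ⟨W₁, hW₁, hW₁T⟩ := hc₁.exists_walk_through_induce hv₁ hw₁ hxv₁ hyw₁.symm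
  obtain ⟨W₂, hW₂, -⟩ := hc₂.exists_walk_through_induce hv₂ hw₂ hxv₂ hyw₂.symm
  have avoid_S {T : Finset V} (hST : S ∩ T = ∅) {u : V} (hu : u = x ∨ u = y ∨ u ∈ T) :
      u ∈ (S : Set V)ᶜ := by
    rcases hu with rfl | rfl | hu
    exacts [hx.2, hy.2, Finset.disjoint_right.mp (Finset.disjoint_iff_inter_eq_empty.mpr hST) hu]
  refine hS.eq_of_forall_edge_mem_of_forall_support_notMem W₁ W₂ T₁
    (fun u hu => avoid_S h1 (hW₁ u hu)) (fun u hu => avoid_S h2 (hW₂ u hu)) hW₁T ?_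
  intro u hu
  rcases hW₂ u hu with rfl | rfl | hu
  exacts [hxyT₁.1, hxyT₁.2, Finset.disjoint_right.mp hdisj hu]

/-- If `M` is a feedback vertex set, `X ⊆ M`, and `T₁, T₂` are disjoint connected subsets of
`V(G) - M` each containing a neighbor of every vertex of `X`, then any feedback vertex set `S`
avoiding both `T₁` and `T₂` satisfies `|X \ S| ≤ 1`. -/
theorem stmt4 {V : Type*} [DecidableEq V] (G : SimpleGraph V)
    (M : Finset V) (hM : IsFVS G ↑M)
    (X : Finset V) (hX : X ⊆ M)
    (T₁ T₂ : Finset V) (hT₁M : Disjoint T₁ M) (hT₂M : Disjoint T₂ M)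
    (hdisj : Disjoint T₁ T₂)
    (hc₁ : (G.induce (T₁ : Set V)).Connected) (hc₂ : (G.induce (T₂ : Set V)).Connected)
    (hn₁ : ∀ x ∈ X, ∃ v ∈ T₁, G.Adj x v) (hn₂ : ∀ x ∈ X, ∃ v ∈ T₂, G.Adj x v)
    (S : Finset V) (hS : IsFVS G ↑S) (h1 : S ∩ T₁ = ∅) (h2 : S ∩ T₂ = ∅) :
    (X \ S).card ≤ 1 :=
  stmt4_general G M X hX T₁ T₂ hT₁M hdisj hc₁ hc₂ hn₁ hn₂ S hS h1 h2
end

section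
/- Let G be a graph with feedback vertex set M, and let (X, {T₁,…,T_t}) be a family where X ⊆ M has size t ≥ 2 and T₁,…,T_t are pairwise disjoint, pairwise non-adjacent connected vertex subsets of G − M each satisfying X ⊆ N(T_i). Then every feedback vertex set S of G either contains at least t−1 vertices of X, or intersects all but at most one of the sets T₁,…,T_t. -/
open SimpleGraph Finset

namespace SimpleGraph

variable {V W : Type*}

theorem Preconnected.reachable_deleteEdges {H : SimpleGraph W} {A : Set W}
    (hA : (H.induce A).Preconnected) {x u : W} (hxA : x ∉ A) {a b : W} (ha : a ∈ A)
    (hb : b ∈ A) : (H.deleteEdges {s(x, u)}).Reachable a b := by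
  let f : H.induce A →g H.deleteEdges {s(x, u)} :=
    ⟨Subtype.val, fun {z w} hzw => deleteEdges_adj.mpr ⟨hzw, fun he => by
      rcases Sym2.mem_iff.mp (Set.mem_singleton_iff.mp he ▸ Sym2.mem_mk_left x u) with h | h
      exacts [hxA (h ▸ z.2), hxA (h ▸ w.2)]⟩⟩
  exact (hA ⟨a, ha⟩ ⟨b, hb⟩).map f

theorem Preconnected.induce_preimage_val {G : SimpleGraph V} {U T : Set V} (hTU : T ⊆ U)
    (hT : (G.induce T).Preconnected) :
    ((G.induce U).induce (Subtype.val ⁻¹' T)).Preconnected := by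
  let f : G.induce T →g (G.induce U).induce (Subtype.val ⁻¹' T) :=
    ⟨fun z => ⟨⟨z, hTU z.2⟩, z.2⟩, id⟩
  exact hT.map f fun ⟨⟨z, _⟩, hz⟩ => ⟨⟨z, hz⟩, rfl⟩

theorem IsAcyclic.not_disjoint_of_adj {H : SimpleGraph W} (hH : H.IsAcyclic) {A B : Set W}
    (hA : (H.induce A).Preconnected) (hB : (H.induce B).Preconnected) {x y : W} (hxy : x ≠ y)
    (hxA : x ∉ A) (hxB : x ∉ B) (hxa : ∃ a ∈ A, H.Adj x a) (hxb : ∃ b ∈ B, H.Adj x b)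
    (hya : ∃ a ∈ A, H.Adj y a) (hyb : ∃ b ∈ B, H.Adj y b) : ¬ Disjoint A B := by
  intro hAB
  obtain ⟨u₁, hu₁, hxu₁⟩ := hxa
  obtain ⟨u₂, hu₂, hxu₂⟩ := hxb
  obtain ⟨v₁, hv₁, hyv₁⟩ := hya
  obtain ⟨v₂, hv₂, hyv₂⟩ := hyb
  have hu₁B (z : W) (hz : z ∈ B) : z ≠ u₁ := fun h => hAB.ne_of_mem hu₁ hz h.symm
  refine isBridge_iff.mp (isAcyclic_iff_forall_adj_isBridge.mp hH hxu₁) ?_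
  have hxu₂' : (H.deleteEdges {s(x, u₁)}).Adj x u₂ :=
    deleteEdges_adj.mpr ⟨hxu₂, by simp [hu₁B u₂ hu₂, hxu₁.ne]⟩
  have hv₂y : (H.deleteEdges {s(x, u₁)}).Adj v₂ y :=
    deleteEdges_adj.mpr ⟨hyv₂.symm, by
      simp [hu₁B v₂ hv₂, ne_of_mem_of_not_mem hv₂ hxB]⟩
  have hyv₁' : (H.deleteEdges {s(x, u₁)}).Adj y v₁ :=
    deleteEdges_adj.mpr ⟨hyv₁, by
      simp [hxy.symm, ne_of_mem_of_not_mem hv₁ hxA]⟩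
  exact hxu₂'.reachable.trans <| (hB.reachable_deleteEdges hxB hu₂ hv₂).trans <|
    hv₂y.reachable.trans <| hyv₁'.reachable.trans <| hA.reachable_deleteEdges hxA hv₁ hu₁

end SimpleGraph

theorem IsFVS.not_disjoint_of_adj {V : Type*} {G : SimpleGraph V} {S A B : Set V}
    (hS : IsFVS G S) (hAS : Disjoint A S) (hBS : Disjoint B S)
    (hA : (G.induce A).Preconnected) (hB : (G.induce B).Preconnected) {x y : V}
    (hxS : x ∉ S) (hyS : y ∉ S) (hxy : x ≠ y) (hxA : x ∉ A) (hxB : x ∉ B)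
    (hxa : ∃ a ∈ A, G.Adj x a) (hxb : ∃ b ∈ B, G.Adj x b)
    (hya : ∃ a ∈ A, G.Adj y a) (hyb : ∃ b ∈ B, G.Adj y b) : ¬ Disjoint A B := by
  have lift {T : Set V} (hTS : Disjoint T S) {z : V} (hzS : z ∉ S) (h : ∃ a ∈ T, G.Adj z a) :
      ∃ a ∈ Subtype.val ⁻¹' T, (G.induce Sᶜ).Adj ⟨z, hzS⟩ a := by
    obtain ⟨a, ha, hza⟩ := h
    exact ⟨⟨a, hTS.notMem_of_mem_left ha⟩, ha, hza⟩
  intro hAB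
  exact IsAcyclic.not_disjoint_of_adj hS (hA.induce_preimage_val hAS.subset_compl_right)
    (hB.induce_preimage_val hBS.subset_compl_right) (x := ⟨x, hxS⟩) (y := ⟨y, hyS⟩)
    (by simpa using hxy) hxA hxB (lift hAS hxS hxa) (lift hBS hxS hxb) (lift hAS hyS hya)
    (lift hBS hyS hyb) (hAB.preimage _)

theorem stmt5_general {V : Type*} [DecidableEq V] (G : SimpleGraph V)
    (M : Finset V)
    (t : ℕ) (X : Finset V) (hX : X ⊆ M) (hXcard : X.card = t)
    (T : Fin t → Finset V)
    (hTM : ∀ i, Disjoint (T i) M)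
    (hdisj : ∀ i j, i ≠ j → Disjoint (T i) (T j))
    (hconn : ∀ i, (G.induce (T i : Set V)).Connected)
    (hnb : ∀ i, ∀ x ∈ X, ∃ v ∈ T i, G.Adj x v)
    (S : Finset V) (hS : IsFVS G ↑S) :
    t - 1 ≤ (X ∩ S).card ∨ ∃ j, ∀ i, i ≠ j → (T i ∩ S).Nonempty := by
  by_contra! ⟨hXS, hT⟩
  obtain ⟨x, hx, y, hy, hxy⟩ := one_lt_card.mp (show 1 < (X \ S).card by
    have := card_sdiff_add_card_inter X S
    omega)
  rw [mem_sdiff] at hx hy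
  have hTS (i : Fin t) (hi : T i ∩ S = ∅) : Disjoint (T i : Set V) S := by
    simpa [disjoint_iff_inter_eq_empty] using hi
  have hXT (i : Fin t) {z : V} (hz : z ∈ X) : z ∉ (T i : Set V) :=
    fun hzT => disjoint_left.mp (hTM i) hzT (hX hz)
  obtain ⟨i, -, hi⟩ := hT ⟨0, by omega⟩
  obtain ⟨j, hji, hj⟩ := hT i
  exact hS.not_disjoint_of_adj (hTS i hi) (hTS j hj) (hconn i).preconnected
    (hconn j).preconnected (by simpa using hx.2) (by simpa using hy.2) hxy (hXT i hx.1)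
    (hXT j hx.1) (hnb i x hx.1) (hnb j x hx.1) (hnb i y hy.1) (hnb j y hy.1)
    (by simpa using hdisj i j hji.symm)

/-- Given a `K̃_{t,t}` structure `(X, {T₁,…,T_t})` with `X ⊆ M` of size `t ≥ 2` and pairwise
disjoint, pairwise non-adjacent connected subsets `T_i` of `G - M` each satisfying
`X ⊆ N(T_i)`, every feedback vertex set `S` of `G` either contains at least `t - 1` vertices
of `X`, or intersects all but at most one of the sets `T_i`. -/
theorem stmt5 {V : Type*} [DecidableEq V] (G : SimpleGraph V)
    (M : Finset V) (hM : IsFVS G ↑M)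
    (t : ℕ) (ht : 2 ≤ t) (X : Finset V) (hX : X ⊆ M) (hXcard : X.card = t)
    (T : Fin t → Finset V)
    (hTM : ∀ i, Disjoint (T i) M)
    (hdisj : ∀ i j, i ≠ j → Disjoint (T i) (T j))
    (hnonadj : ∀ i j, i ≠ j → ∀ u ∈ T i, ∀ v ∈ T j, ¬ G.Adj u v)
    (hconn : ∀ i, (G.induce (T i : Set V)).Connected)
    (hnb : ∀ i, ∀ x ∈ X, ∃ v ∈ T i, G.Adj x v)
    (S : Finset V) (hS : IsFVS G ↑S) :
    t - 1 ≤ (X ∩ S).card ∨ ∃ j, ∀ i, i ≠ j → (T i ∩ S).Nonempty :=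
  stmt5_general G M t X hX hXcard T hTM hdisj hconn hnb S hS
end

section
/- Let G be a graph, M a feedback vertex set, T a subtree of G − M, and suppose S is a feedback vertex set of G containing at least one vertex in each of d_M(T) + b(T) given pairwise vertex-disjoint paths inside T. Then S' = (S \ T) ∪ (N(T) ∩ M) ∪ ∂(T) is a feedback vertex set of G of size at most |S|. -/
/-!
A cycle missing `(S \ T) ∪ (N(T) ∩ M) ∪ ∂(T)` cannot stay outside `T`, where it would avoid `S`,
nor inside `T`, since `G[T]` is acyclic; so it crosses from `T` to `V - T` along an edge `vw`, and
then `w ∈ N(T) ∩ M` or `v ∈ ∂(T)`. For the size, the `d_M(T) + b(T)` disjoint paths inside `T` each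
meet `S`, so `|S ∩ T| ≥ d_M(T) + b(T)`.
-/

open SimpleGraph Finset

theorem SimpleGraph.Walk.exists_boundary_dart_of_mem_support {V : Type*} [DecidableEq V]
    {G : SimpleGraph V} {u x y : V} (c : G.Walk u u) (S : Set V)
    (hx : x ∈ c.support) (hy : y ∈ c.support) (hxS : x ∈ S) (hyS : y ∉ S) :
    ∃ d ∈ c.darts, d.fst ∈ S ∧ d.snd ∉ S := by
  by_cases hu : u ∈ S
  · obtain ⟨d, hd, hdS⟩ := (c.takeUntil y hy).exists_boundary_dart S hu hyS
    exact ⟨d, c.darts_takeUntil_subset_darts hy hd, hdS⟩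
  · obtain ⟨d, hd, hdS⟩ := (c.dropUntil x hx).exists_boundary_dart S hxS hu
    exact ⟨d, c.darts_dropUntil_subset_darts hx hd, hdS⟩

theorem isFVS_iff_forall_isCycle {V : Type*} {G : SimpleGraph V} {s : Set V} :
    IsFVS G s ↔ ∀ u (c : G.Walk u u), c.IsCycle → ∃ x ∈ c.support, x ∈ s := by
  let f := (Embedding.induce (G := G) sᶜ).toHom
  have hinj : Function.Injective f := (Embedding.induce (G := G) sᶜ).injective
  constructor
  · intro hs u c hc
    by_contra! hout
    refine hs (c.induce sᶜ hout) ?_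
    rwa [← Walk.isCycle_map_iff_of_injective hinj, Walk.map_induce]
  · intro h u c hc
    obtain ⟨x, hx, hxs⟩ := h _ _ (hc.map hinj)
    obtain ⟨y, -, rfl⟩ := List.mem_map.mp ((c.support_map _) ▸ hx)
    exact y.2 hxs

section TreeReplacement

variable {V : Type*} [Fintype V] [DecidableEq V] (G : SimpleGraph V) [DecidableRel G.Adj]
  (M T : Finset V)

/-- `N(T) ∩ M`. -/
def treeNbhd : Finset V := M.filter (fun x => ∃ v ∈ T, G.Adj x v)

/-- `∂(T)`. -/
def treeBoundary : Finset V := T.filter (fun v => ∃ w, w ∉ M ∧ w ∉ T ∧ G.Adj v w)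

variable {G M T}

theorem IsFVS.sdiff_union_treeNbhd_union_treeBoundary {S : Finset V} (hS : IsFVS G ↑S)
    (hT : (G.induce (T : Set V)).IsAcyclic) :
    IsFVS G ↑((S \ T) ∪ treeNbhd G M T ∪ treeBoundary G M T) := by
  have hTc : IsFVS G (↑T)ᶜ := by rwa [IsFVS, compl_compl]
  rw [isFVS_iff_forall_isCycle] at hS hTc ⊢
  intro u c hc
  by_cases hmeet : ∃ x ∈ c.support, x ∈ T
  · obtain ⟨x, hx, hxT⟩ := hmeet
    obtain ⟨y, hy, hyT⟩ := hTc u c hc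
    obtain ⟨d, hd, hfst, hsnd⟩ :=
      c.exists_boundary_dart_of_mem_support (↑T) hx hy hxT hyT
    by_cases hsndM : d.snd ∈ M
    · refine ⟨d.snd, c.dart_snd_mem_support_of_mem_darts hd, ?_⟩
      simp only [coe_union, Set.mem_union, mem_coe]
      exact Or.inl (Or.inr (mem_filter.mpr ⟨hsndM, d.fst, hfst, d.adj.symm⟩))
    · refine ⟨d.fst, c.dart_fst_mem_support_of_mem_darts hd, ?_⟩
      simp only [coe_union, Set.mem_union, mem_coe]
      exact Or.inr (mem_filter.mpr ⟨hfst, d.snd, hsndM, hsnd, d.adj⟩)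
  · push Not at hmeet
    obtain ⟨x, hx, hxS⟩ := hS u c hc
    exact ⟨x, hx, by simp [hxS, hmeet x hx]⟩

end TreeReplacement

theorem Fintype.card_le_card_of_forall_exists_mem_of_disjoint {ι V : Type*} [Fintype ι]
    (S : Finset V) (P : ι → V → Prop) (hdisj : ∀ i j, i ≠ j → ∀ x, P i x → ¬ P j x)
    (hhit : ∀ i, ∃ v ∈ S, P i v) : Fintype.card ι ≤ #S := by
  choose f hfS hfP using hhit
  have hinj : Function.Injective f := fun i j hij => by
    by_contra hne
    exact hdisj i j hne _ (hfP i) (hij ▸ hfP j)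
  rw [← Finset.card_univ]
  exact Finset.card_le_card_of_injOn f (fun i _ => hfS i) hinj.injOn

theorem Finset.card_sdiff_union_union_le {V : Type*} [DecidableEq V] {S T D B : Finset V}
    (h : #D + #B ≤ #(S ∩ T)) : #((S \ T) ∪ D ∪ B) ≤ #S :=
  calc #((S \ T) ∪ D ∪ B) ≤ #(S \ T) + #D + #B :=
        (card_union_le _ _).trans (Nat.add_le_add_right (card_union_le _ _) _)
    _ ≤ #(S \ T) + #(S ∩ T) := by omega
    _ = #S := card_sdiff_add_card_inter S T

theorem stmt9_general {V : Type*} [Fintype V] [DecidableEq V] (G : SimpleGraph V) [DecidableRel G.Adj]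
    (M : Finset V)
    (T : Finset V) (hTree : (G.induce (T : Set V)).IsTree)
    (a c : Fin ((M.filter (fun x => ∃ v ∈ T, G.Adj x v)).card +
        (T.filter (fun v => ∃ w, w ∉ M ∧ w ∉ T ∧ G.Adj v w)).card) → V)
    (p : ∀ i, G.Walk (a i) (c i))
    (hsupp : ∀ i, ∀ x ∈ (p i).support, x ∈ T)
    (hpd : ∀ i j, i ≠ j → ∀ x ∈ (p i).support, x ∉ (p j).support)
    (S : Finset V) (hS : IsFVS G ↑S)
    (hhit : ∀ i, ∃ v ∈ S, v ∈ (p i).support) :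
    IsFVS G ↑((S \ T) ∪ M.filter (fun x => ∃ v ∈ T, G.Adj x v) ∪
        T.filter (fun v => ∃ w, w ∉ M ∧ w ∉ T ∧ G.Adj v w)) ∧
    ((S \ T) ∪ M.filter (fun x => ∃ v ∈ T, G.Adj x v) ∪
        T.filter (fun v => ∃ w, w ∉ M ∧ w ∉ T ∧ G.Adj v w)).card ≤ S.card := by
  refine ⟨hS.sdiff_union_treeNbhd_union_treeBoundary (M := M) hTree.isAcyclic,
    card_sdiff_union_union_le ?_⟩
  have hhit' : ∀ i, ∃ v ∈ S ∩ T, v ∈ (p i).support := fun i =>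
    let ⟨v, hvS, hv⟩ := hhit i
    ⟨v, mem_inter.mpr ⟨hvS, hsupp i v hv⟩, hv⟩
  simpa using Fintype.card_le_card_of_forall_exists_mem_of_disjoint (S ∩ T)
    (fun i x => x ∈ (p i).support) hpd hhit'

/-- Let `M` be a feedback vertex set of `G`, `T` a subtree of `G - M`, and `S` a feedback
vertex set containing at least one vertex in each of `d_M(T) + b(T)` given pairwise
vertex-disjoint paths inside `T`. Then `S' = (S \ T) ∪ (N(T) ∩ M) ∪ ∂(T)` is a feedback
vertex set of `G` of size at most `|S|`. -/
theorem stmt9 {V : Type*} [Fintype V] [DecidableEq V] (G : SimpleGraph V) [DecidableRel G.Adj]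
    (M : Finset V) (hM : IsFVS G ↑M)
    (T : Finset V) (hTM : Disjoint T M) (hTree : (G.induce (T : Set V)).IsTree)
    (a c : Fin ((M.filter (fun x => ∃ v ∈ T, G.Adj x v)).card +
        (T.filter (fun v => ∃ w, w ∉ M ∧ w ∉ T ∧ G.Adj v w)).card) → V)
    (p : ∀ i, G.Walk (a i) (c i))
    (hp : ∀ i, (p i).IsPath) (hlen : ∀ i, 1 ≤ (p i).length)
    (hsupp : ∀ i, ∀ x ∈ (p i).support, x ∈ T)
    (hpd : ∀ i j, i ≠ j → ∀ x ∈ (p i).support, x ∉ (p j).support)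
    (S : Finset V) (hS : IsFVS G ↑S)
    (hhit : ∀ i, ∃ v ∈ S, v ∈ (p i).support) :
    IsFVS G ↑((S \ T) ∪ M.filter (fun x => ∃ v ∈ T, G.Adj x v) ∪
        T.filter (fun v => ∃ w, w ∉ M ∧ w ∉ T ∧ G.Adj v w)) ∧
    ((S \ T) ∪ M.filter (fun x => ∃ v ∈ T, G.Adj x v) ∪
        T.filter (fun v => ∃ w, w ∉ M ∧ w ∉ T ∧ G.Adj v w)).card ≤ S.card :=
  stmt9_general G M T hTree a c p hsupp hpd S hS hhit
end

section
/- Let G be a graph with feedback vertex set M, let X ⊆ M with |X| ≥ 1, and let 𝒯 be a family of at least |X| + 2 pairwise disjoint, pairwise non-adjacent connected vertex subsets of V(G) − M, each a union of connected components of G − M, such that N(T) ∩ M = X for all T ∈ 𝒯. Then there is T ∈ 𝒯 such that G and G − T have the same minimum feedback vertex set size. -/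
/-!
Suppose every `T ∈ 𝒯` lowers the optimum `f`, and let `S_T` be an optimal feedback vertex set of
`G - T`, so `|S_T| < f`. Trading the vertices of `S_T` inside `⋃ 𝒯` for `X` gives a feedback
vertex set of `G`, because each member of `𝒯` then becomes a separate tree; hence `S_T` misses
more vertices of `X` than it has in `⋃ 𝒯`. If it missed two vertices `x, y ∈ X`, two members of
`𝒯 \ {T}` avoiding `S_T` would close a cycle through `x` and `y` in `G - T - S_T`; so `S_T`
meets all but two members of `𝒯`, too many. Thus `X \ S_T = {x_T}` and `S_T` avoids `⋃ 𝒯`.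
By pigeonhole `x_{T₁} = x_{T₂}` for some `T₁ ≠ T₂`, and then `S_{T₂}` is already a feedback
vertex set of `G`: a cycle through `T₂` avoiding `S_{T₂}` stays inside `T₂ ∪ {x}`, which lies in
the forest `G - T₁ - S_{T₁}`.
-/

open SimpleGraph Finset

noncomputable def minFVSOn {V : Type*} (G : SimpleGraph V) (A : Set V) : ℕ :=
  sInf {n : ℕ | ∃ S : Finset V, ↑S ⊆ A ∧ S.card = n ∧ (G.induce (A \ ↑S)).IsAcyclic}

namespace SimpleGraph

variable {V : Type*} {G : SimpleGraph V}

theorem isAcyclic_induce_iff {A : Set V} :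
    (G.induce A).IsAcyclic ↔
      ∀ ⦃u : V⦄ (c : G.Walk u u), c.IsCycle → ∃ v ∈ c.support, v ∉ A := by
  refine ⟨fun h u c hc => ?_, fun h u c hc => ?_⟩
  · by_contra! hA
    refine h (c.induce A hA) ?_
    rwa [← Walk.isCycle_map_iff_of_injective (f := (Embedding.induce A).toHom)
      Subtype.val_injective, Walk.map_induce]
  · obtain ⟨v, hv, hvA⟩ := h _ (hc.map (f := (Embedding.induce A).toHom) Subtype.val_injective)
    rw [Walk.support_map, List.mem_map] at hv
    obtain ⟨w, -, rfl⟩ := hv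
    exact hvA w.2

namespace Walk

theorem support_subset_of_adj_closed {T : Set V} {u v : V} (p : G.Walk u v)
    (hT : ∀ y ∈ T, ∀ z ∈ p.support, G.Adj y z → z ∈ T) (hp : ∃ a ∈ p.support, a ∈ T) :
    ∀ z ∈ p.support, z ∈ T := by
  induction p with
  | nil => simpa using hp
  | @cons u w v h p ih =>
    have hT' : ∀ y ∈ T, ∀ z ∈ p.support, G.Adj y z → z ∈ T :=
      fun y hy z hz => hT y hy z (List.mem_cons_of_mem _ hz)
    have hw : w ∈ T := by
      obtain ⟨a, ha, haT⟩ := hp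
      rcases List.mem_cons.mp ha with rfl | ha
      · exact hT a haT w (by simp) h
      · exact ih hT' ⟨a, ha, haT⟩ w p.start_mem_support
    have hpT := ih hT' ⟨w, p.start_mem_support, hw⟩
    intro z hz
    rcases List.mem_cons.mp hz with rfl | hz
    · exact hT w hw z (by simp) h.symm
    · exact hpT z hz

theorem IsCycle.exists_walk_not_mem_support {u : V} {c : G.Walk u u} (hc : c.IsCycle) (x : V) :
    ∃ (a b : V) (q : G.Walk a b), x ∉ q.support ∧ (∀ z ∈ q.support, z ∈ c.support) ∧
      ∀ z ∈ c.support, z = x ∨ z ∈ q.support := by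
  classical
  by_cases hx : x ∈ c.support
  · -- `c'` starts and ends at `x`, so removing its first and last vertex removes `x` entirely.
    set c' := c.rotate x hx
    have hc' : c'.IsCycle := hc.rotate hx
    have hnil : ¬ c'.tail.Nil := not_nil_of_ne (c'.adj_snd hc'.not_nil).ne.symm
    have hsupp : c'.support = x :: (c'.tail.dropLast.support ++ [x]) := by
      rw [support_dropLast_concat hnil, cons_support_tail hc'.not_nil]
    have hmem : ∀ z, z ∈ c.support ↔ z = x ∨ z ∈ c'.tail.dropLast.support := by
      intro z
      rw [← c.mem_support_rotate_iff x hx, hsupp]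
      simp only [List.mem_cons, List.mem_append]
      tauto
    refine ⟨_, _, c'.tail.dropLast, fun h => ?_, fun z hz => (hmem z).2 (Or.inr hz),
      fun z hz => (hmem z).1 hz⟩
    have := hc'.support_nodup
    rw [hsupp, List.tail_cons, List.nodup_append] at this
    exact this.2.2 x h x (List.mem_singleton_self x) rfl
  · exact ⟨u, u, c, hx, fun _ => id, fun _ => Or.inr⟩

theorem IsCycle.support_subset_insert {T : Set V} {x u : V} {c : G.Walk u u} (hc : c.IsCycle)
    (hxT : x ∉ T) (hT : ∀ y ∈ T, ∀ z ∈ c.support, G.Adj y z → z ∈ insert x T)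
    (hcT : ∃ a ∈ c.support, a ∈ T) : ∀ z ∈ c.support, z ∈ insert x T := by
  obtain ⟨a, b, q, hxq, hqc, hcq⟩ := hc.exists_walk_not_mem_support x
  have hqT := q.support_subset_of_adj_closed (T := T) (fun y hy z hz hyz => ?_) ?_
  · intro z hz
    rcases hcq z hz with rfl | hz
    · exact Set.mem_insert _ _
    · exact Set.mem_insert_of_mem _ (hqT z hz)
  · rcases hT y hy z (hqc z hz) hyz with rfl | h
    · exact absurd hz hxq
    · exact h
  · obtain ⟨a, ha, haT⟩ := hcT
    rcases hcq a ha with rfl | ha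
    · exact absurd haT hxT
    · exact ⟨a, ha, haT⟩

theorem IsPath.eq_of_isAcyclic_induce {A : Set V} (hA : (G.induce A).IsAcyclic) {u v : V}
    {p q : G.Walk u v} (hp : p.IsPath) (hq : q.IsPath) (hpA : ∀ z ∈ p.support, z ∈ A)
    (hqA : ∀ z ∈ q.support, z ∈ A) : p = q := by
  by_contra hne
  obtain ⟨w, -, -, c, hc, hsub⟩ := hp.exists_isCycle_sublist_of_ne hq hne
  obtain ⟨z, hz, hzA⟩ := isAcyclic_induce_iff.mp hA c hc
  rcases List.mem_append.mp (hsub.subset hz) with h | h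
  · exact hzA (hpA z h)
  · exact hzA (hqA z (by simpa using List.mem_of_mem_tail h))

end Walk

theorem exists_isPath_through {T : Set V} (hT : (G.induce T).Connected) {x y u w : V}
    (hxT : x ∉ T) (hyT : y ∉ T) (hxy : x ≠ y) (hu : u ∈ T) (hw : w ∈ T)
    (hxu : G.Adj x u) (hwy : G.Adj w y) :
    ∃ p : G.Walk x y, p.IsPath ∧ u ∈ p.support ∧ ∀ z ∈ p.support, z = x ∨ z = y ∨ z ∈ T := by
  classical
  obtain ⟨r⟩ := hT.preconnected ⟨u, hu⟩ ⟨w, hw⟩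
  obtain ⟨r', hr', hr'T⟩ : ∃ r' : G.Walk u w, r'.IsPath ∧ ∀ z ∈ r'.support, z ∈ T := by
    refine ⟨r.toPath.1.map (Embedding.induce T).toHom, r.toPath.2.map Subtype.val_injective,
      fun z hz => ?_⟩
    obtain ⟨z, -, rfl⟩ := List.mem_map.mp (Walk.support_map _ _ ▸ hz)
    exact z.2
  have hxr : x ∉ (r'.concat hwy).support := by
    rw [Walk.support_concat, List.mem_append, List.mem_singleton]
    exact fun h => h.elim (fun h => hxT (hr'T x h)) hxy
  refine ⟨.cons hxu (r'.concat hwy), (hr'.concat (fun h => hyT (hr'T y h)) hwy).cons hxr,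
    by simp, fun z hz => ?_⟩
  rw [Walk.support_cons, Walk.support_concat, List.mem_cons, List.mem_append,
    List.mem_singleton] at hz
  rcases hz with rfl | hz | rfl
  · exact Or.inl rfl
  · exact Or.inr (Or.inr (hr'T z hz))
  · exact Or.inr (Or.inl rfl)

theorem not_isAcyclic_induce_of_disjoint_connected {A T₁ T₂ : Set V}
    (hT₁ : (G.induce T₁).Connected) (hT₂ : (G.induce T₂).Connected) (hT₁₂ : Disjoint T₁ T₂)
    (hT₁A : T₁ ⊆ A) (hT₂A : T₂ ⊆ A) {x y : V} (hxA : x ∈ A) (hyA : y ∈ A) (hxy : x ≠ y)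
    (hx₁ : x ∉ T₁) (hx₂ : x ∉ T₂) (hy₁ : y ∉ T₁) (hy₂ : y ∉ T₂)
    (hxT₁ : ∃ u ∈ T₁, G.Adj x u) (hyT₁ : ∃ w ∈ T₁, G.Adj y w)
    (hxT₂ : ∃ u ∈ T₂, G.Adj x u) (hyT₂ : ∃ w ∈ T₂, G.Adj y w) :
    ¬ (G.induce A).IsAcyclic := by
  intro hA
  obtain ⟨u₁, hu₁, hxu₁⟩ := hxT₁
  obtain ⟨w₁, hw₁, hwy₁⟩ := hyT₁
  obtain ⟨u₂, hu₂, hxu₂⟩ := hxT₂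
  obtain ⟨w₂, hw₂, hwy₂⟩ := hyT₂
  obtain ⟨p₁, hp₁, hu₁p₁, hp₁T⟩ := exists_isPath_through hT₁ hx₁ hy₁ hxy hu₁ hw₁ hxu₁ hwy₁.symm
  obtain ⟨p₂, hp₂, -, hp₂T⟩ := exists_isPath_through hT₂ hx₂ hy₂ hxy hu₂ hw₂ hxu₂ hwy₂.symm
  have hsubA : ∀ T ⊆ A, ∀ p : G.Walk x y, (∀ z ∈ p.support, z = x ∨ z = y ∨ z ∈ T) →
      ∀ z ∈ p.support, z ∈ A := by
    rintro T hTA p hpT z hz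
    rcases hpT z hz with rfl | rfl | hz
    exacts [hxA, hyA, hTA hz]
  have h₁₂ := hp₁.eq_of_isAcyclic_induce hA hp₂ (hsubA T₁ hT₁A p₁ hp₁T) (hsubA T₂ hT₂A p₂ hp₂T)
  subst h₁₂
  rcases hp₂T u₁ hu₁p₁ with rfl | rfl | hu₁₂
  exacts [hx₁ hu₁, hy₁ hu₁, Set.disjoint_left.mp hT₁₂ hu₁ hu₁₂]

theorem isAcyclic_induce_of_adj_closed {ι : Type*} {A : Set V} {s : Set ι} {T : ι → Set V}
    (hT : ∀ i ∈ s, (G.induce (T i)).IsAcyclic)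
    (hclosed : ∀ i ∈ s, ∀ y ∈ T i, ∀ z ∈ A, G.Adj y z → z ∈ T i)
    (hrest : (G.induce (A \ ⋃ i ∈ s, T i)).IsAcyclic) : (G.induce A).IsAcyclic := by
  refine isAcyclic_induce_iff.mpr fun u c hc => ?_
  by_contra! hcA
  by_cases hmeet : ∃ i ∈ s, ∃ a ∈ c.support, a ∈ T i
  · obtain ⟨i, hi, hcT⟩ := hmeet
    have hcTi := c.support_subset_of_adj_closed
      (fun y hy z hz hyz => hclosed i hi y hy z (hcA z hz) hyz) hcT
    obtain ⟨z, hz, hzT⟩ := isAcyclic_induce_iff.mp (hT i hi) c hc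
    exact hzT (hcTi z hz)
  · push Not at hmeet
    obtain ⟨z, hz, hzA⟩ := isAcyclic_induce_iff.mp hrest c hc
    refine hzA ⟨hcA z hz, ?_⟩
    simp only [Set.mem_iUnion, not_exists]
    exact fun i hi hzi => hmeet i hi z hz hzi

theorem isAcyclic_induce_of_adj_closed_insert {A T : Set V} {x : V} (hxT : x ∉ T)
    (hclosed : ∀ y ∈ T, ∀ z ∈ A, G.Adj y z → z ∈ insert x T)
    (hin : (G.induce (A ∩ insert x T)).IsAcyclic) (hout : (G.induce (A \ T)).IsAcyclic) :
    (G.induce A).IsAcyclic := by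
  refine isAcyclic_induce_iff.mpr fun u c hc => ?_
  by_contra! hcA
  by_cases hmeet : ∃ a ∈ c.support, a ∈ T
  · have hcT := hc.support_subset_insert hxT
      (fun y hy z hz hyz => hclosed y hy z (hcA z hz) hyz) hmeet
    obtain ⟨z, hz, hzA⟩ := isAcyclic_induce_iff.mp hin c hc
    exact hzA ⟨hcA z hz, hcT z hz⟩
  · push Not at hmeet
    obtain ⟨z, hz, hzA⟩ := isAcyclic_induce_iff.mp hout c hc
    exact hzA ⟨hcA z hz, hmeet z hz⟩

end SimpleGraph

section minFVSOn

variable {V : Type*} {G : SimpleGraph V} {A B : Set V}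

theorem isAcyclic_induce_sdiff_filter_mem [DecidablePred (· ∈ A)] (hAB : A ⊆ B) {S : Finset V}
    (hS : (G.induce (B \ ↑S)).IsAcyclic) :
    (G.induce (A \ ↑(S.filter (· ∈ A)))).IsAcyclic := by
  refine hS.embedding (G.induceHomOfLE fun v hv => ?_)
  obtain ⟨hvA, hvS⟩ := hv
  exact ⟨hAB hvA, fun h => hvS (Finset.mem_filter.mpr ⟨h, hvA⟩)⟩

theorem minFVSOn_le {S : Finset V} (hSA : ↑S ⊆ A) (hS : (G.induce (A \ ↑S)).IsAcyclic) :
    minFVSOn G A ≤ S.card := by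
  unfold minFVSOn
  exact Nat.sInf_le ⟨S, hSA, rfl, hS⟩

theorem minFVSOn_univ_le {S : Finset V} (hS : IsFVS G ↑S) : minFVSOn G Set.univ ≤ S.card :=
  minFVSOn_le (Set.subset_univ _) (by rwa [← Set.compl_eq_univ_sdiff])

theorem exists_card_eq_minFVSOn {S : Finset V} (hSA : ↑S ⊆ A)
    (hS : (G.induce (A \ ↑S)).IsAcyclic) :
    ∃ S : Finset V, ↑S ⊆ A ∧ S.card = minFVSOn G A ∧ (G.induce (A \ ↑S)).IsAcyclic := by
  have hne : {n | ∃ S : Finset V, ↑S ⊆ A ∧ S.card = n ∧ (G.induce (A \ ↑S)).IsAcyclic}.Nonempty :=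
    ⟨S.card, S, hSA, rfl, hS⟩
  exact Nat.sInf_mem hne

theorem minFVSOn_mono (hAB : A ⊆ B) {S : Finset V} (hSB : ↑S ⊆ B)
    (hS : (G.induce (B \ ↑S)).IsAcyclic) : minFVSOn G A ≤ minFVSOn G B := by
  classical
  obtain ⟨S, -, hcard, hS⟩ := exists_card_eq_minFVSOn hSB hS
  calc minFVSOn G A ≤ (S.filter (· ∈ A)).card :=
        minFVSOn_le (fun v hv => (Finset.mem_filter.mp hv).2)
          (isAcyclic_induce_sdiff_filter_mem hAB hS)
    _ ≤ S.card := Finset.card_filter_le _ _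
    _ = minFVSOn G B := hcard

theorem exists_card_lt_minFVSOn_univ {M : Finset V} (hM : IsFVS G ↑M)
    (hA : minFVSOn G A ≠ minFVSOn G Set.univ) :
    ∃ S : Finset V, (G.induce (A \ ↑S)).IsAcyclic ∧ S.card < minFVSOn G Set.univ := by
  classical
  have hM' : (G.induce (Set.univ \ ↑M)).IsAcyclic := by rwa [← Set.compl_eq_univ_sdiff]
  obtain ⟨S, -, hcard, hS⟩ := exists_card_eq_minFVSOn (fun v hv => (Finset.mem_filter.mp hv).2)
    (isAcyclic_induce_sdiff_filter_mem (Set.subset_univ A) hM')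
  exact ⟨S, hS, hcard ▸ lt_of_le_of_ne (minFVSOn_mono (Set.subset_univ A)
    (Set.subset_univ _) hM') hA⟩

end minFVSOn

section TwinComponents

variable {V : Type*} [DecidableEq V] {G : SimpleGraph V} {X : Finset V} {𝒯 : Finset (Finset V)}

theorem isFVS_union_sdiff_biUnion
    (hnbr : ∀ T ∈ 𝒯, ∀ y ∈ T, ∀ z, G.Adj y z → z ∈ T ∨ z ∈ X)
    (hacyc : ∀ T ∈ 𝒯, (G.induce (T : Set V)).IsAcyclic)
    {T S : Finset V} (hT : T ∈ 𝒯) (hS : (G.induce ((T : Set V)ᶜ \ S)).IsAcyclic) :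
    IsFVS G ↑(X ∪ (S \ 𝒯.biUnion id)) := by
  refine isAcyclic_induce_of_adj_closed (s := (𝒯 : Set (Finset V)))
    (T := fun T : Finset V => (T : Set V)) hacyc ?_ ?_
  · intro T' hT' y hy z hz hyz
    refine (hnbr T' hT' y hy z hyz).resolve_right fun hzX => hz ?_
    exact Finset.mem_coe.mpr (Finset.mem_union_left _ hzX)
  · refine hS.embedding (G.induceHomOfLE fun v hv => ?_)
    simp only [Set.mem_sdiff, Set.mem_compl_iff, Set.mem_iUnion, Finset.mem_coe,
      Finset.mem_union, Finset.mem_sdiff, Finset.mem_biUnion, id, not_or, not_and,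
      not_exists] at hv ⊢
    exact ⟨fun hvT => hv.2 T hT hvT, fun hvS => hv.1.2 hvS hv.2⟩

theorem card_filter_inter_eq_empty_le_one
    (hconn : ∀ T ∈ 𝒯, (G.induce (T : Set V)).Connected)
    (hdisj : ∀ T ∈ 𝒯, ∀ T' ∈ 𝒯, T ≠ T' → Disjoint T T')
    (hadj : ∀ T ∈ 𝒯, ∀ x ∈ X, ∃ u ∈ T, G.Adj x u)
    (hTX : ∀ T ∈ 𝒯, Disjoint T X)
    {T S : Finset V} (hT : T ∈ 𝒯) (hS : (G.induce ((T : Set V)ᶜ \ S)).IsAcyclic)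
    {x y : V} (hx : x ∈ X \ S) (hy : y ∈ X \ S) (hxy : x ≠ y) :
    ((𝒯.erase T).filter (fun T' => S ∩ T' = ∅)).card ≤ 1 := by
  obtain ⟨hxX, hxS⟩ := Finset.mem_sdiff.mp hx
  obtain ⟨hyX, hyS⟩ := Finset.mem_sdiff.mp hy
  refine Finset.card_le_one.mpr fun T₁ h₁ T₂ h₂ => ?_
  by_contra h₁₂
  simp only [Finset.mem_filter, Finset.mem_erase] at h₁ h₂
  obtain ⟨⟨hT₁T, hT₁⟩, hST₁⟩ := h₁
  obtain ⟨⟨hT₂T, hT₂⟩, hST₂⟩ := h₂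
  have hsub : ∀ T' ∈ 𝒯, T' ≠ T → S ∩ T' = ∅ → (T' : Set V) ⊆ (T : Set V)ᶜ \ S :=
    fun T' hT' hT'T hST' v hv => ⟨Finset.disjoint_left.mp (hdisj T' hT' T hT hT'T) hv,
      fun hvS => Finset.notMem_empty v (hST' ▸ Finset.mem_inter.mpr ⟨hvS, hv⟩)⟩
  have hnotin : ∀ z ∈ X, ∀ T' ∈ 𝒯, z ∉ (T' : Set V) :=
    fun z hz T' hT' hzT' => Finset.disjoint_left.mp (hTX T' hT') hzT' hz
  exact not_isAcyclic_induce_of_disjoint_connected (hconn T₁ hT₁) (hconn T₂ hT₂)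
    (Finset.disjoint_coe.mpr (hdisj T₁ hT₁ T₂ hT₂ h₁₂))
    (hsub T₁ hT₁ hT₁T hST₁) (hsub T₂ hT₂ hT₂T hST₂)
    ⟨hnotin x hxX T hT, hxS⟩ ⟨hnotin y hyX T hT, hyS⟩ hxy
    (hnotin x hxX T₁ hT₁) (hnotin x hxX T₂ hT₂) (hnotin y hyX T₁ hT₁) (hnotin y hyX T₂ hT₂)
    (hadj T₁ hT₁ x hxX) (hadj T₁ hT₁ y hyX) (hadj T₂ hT₂ x hxX) (hadj T₂ hT₂ y hyX) hS

theorem card_le_card_inter_biUnion_add_two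
    (hconn : ∀ T ∈ 𝒯, (G.induce (T : Set V)).Connected)
    (hdisj : ∀ T ∈ 𝒯, ∀ T' ∈ 𝒯, T ≠ T' → Disjoint T T')
    (hadj : ∀ T ∈ 𝒯, ∀ x ∈ X, ∃ u ∈ T, G.Adj x u)
    (hTX : ∀ T ∈ 𝒯, Disjoint T X)
    {T S : Finset V} (hT : T ∈ 𝒯) (hS : (G.induce ((T : Set V)ᶜ \ S)).IsAcyclic)
    {x y : V} (hx : x ∈ X \ S) (hy : y ∈ X \ S) (hxy : x ≠ y) :
    𝒯.card ≤ (S ∩ 𝒯.biUnion id).card + 2 := by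
  have hfree := card_filter_inter_eq_empty_le_one hconn hdisj hadj hTX hT hS hx hy hxy
  have hcount := Finset.card_le_card_biUnion_add_card_fiber (s := 𝒯.erase T) (f := (S ∩ ·))
    fun T₁ h₁ T₂ h₂ h₁₂ => (hdisj T₁ (Finset.mem_of_mem_erase h₁) T₂
      (Finset.mem_of_mem_erase h₂) h₁₂).mono Finset.inter_subset_right Finset.inter_subset_right
  have hsub : (𝒯.erase T).biUnion (S ∩ ·) ⊆ S ∩ 𝒯.biUnion id :=
    Finset.biUnion_subset.mpr fun T' hT' => Finset.inter_subset_inter_left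
      (Finset.subset_biUnion_of_mem id (Finset.mem_of_mem_erase hT'))
  have := Finset.card_le_card hsub
  have := Finset.card_erase_of_mem hT
  have := Finset.card_pos.mpr ⟨T, hT⟩
  omega

theorem exists_sdiff_eq_singleton_of_card_lt_minFVSOn
    (hnbr : ∀ T ∈ 𝒯, ∀ y ∈ T, ∀ z, G.Adj y z → z ∈ T ∨ z ∈ X)
    (hacyc : ∀ T ∈ 𝒯, (G.induce (T : Set V)).IsAcyclic)
    (hconn : ∀ T ∈ 𝒯, (G.induce (T : Set V)).Connected)
    (hdisj : ∀ T ∈ 𝒯, ∀ T' ∈ 𝒯, T ≠ T' → Disjoint T T')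
    (hadj : ∀ T ∈ 𝒯, ∀ x ∈ X, ∃ u ∈ T, G.Adj x u)
    (hTX : ∀ T ∈ 𝒯, Disjoint T X) (hcard : X.card + 2 ≤ 𝒯.card)
    {T S : Finset V} (hT : T ∈ 𝒯) (hS : (G.induce ((T : Set V)ᶜ \ S)).IsAcyclic)
    (hSG : S.card < minFVSOn G Set.univ) :
    ∃ x, X \ S = {x} ∧ Disjoint S (𝒯.biUnion id) := by
  have hXU : Disjoint X (𝒯.biUnion id) :=
    (Finset.disjoint_biUnion_right _ _ _).mpr fun T' hT' => (hTX T' hT').symm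
  have hW : X ∪ (S \ 𝒯.biUnion id) ⊆ (X \ S) ∪ (S \ 𝒯.biUnion id) := by
    intro v hv
    rcases Finset.mem_union.mp hv with hvX | hvSU
    · by_cases hvS : v ∈ S
      · exact Finset.mem_union_right _ (Finset.mem_sdiff.mpr ⟨hvS, Finset.disjoint_left.mp hXU hvX⟩)
      · exact Finset.mem_union_left _ (Finset.mem_sdiff.mpr ⟨hvX, hvS⟩)
    · exact Finset.mem_union_right _ hvSU
  have hlt : (S ∩ 𝒯.biUnion id).card < (X \ S).card := by
    have := minFVSOn_univ_le (isFVS_union_sdiff_biUnion hnbr hacyc hT hS)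
    have := (Finset.card_le_card hW).trans (Finset.card_union_le _ _)
    have := Finset.card_inter_add_card_sdiff S (𝒯.biUnion id)
    omega
  have hle : (X \ S).card ≤ 1 := by
    by_contra! h
    obtain ⟨x, hx, y, hy, hxy⟩ := Finset.one_lt_card.mp h
    have := card_le_card_inter_biUnion_add_two hconn hdisj hadj hTX hT hS hx hy hxy
    have := Finset.card_le_card (Finset.sdiff_subset : X \ S ⊆ X)
    omega
  obtain ⟨x, hx⟩ := Finset.card_eq_one.mp (by omega : (X \ S).card = 1)
  exact ⟨x, hx, Finset.disjoint_iff_inter_eq_empty.mpr (Finset.card_eq_zero.mp (by omega))⟩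

theorem isFVS_of_sdiff_eq_singleton
    (hnbr : ∀ T ∈ 𝒯, ∀ y ∈ T, ∀ z, G.Adj y z → z ∈ T ∨ z ∈ X)
    (hdisj : ∀ T ∈ 𝒯, ∀ T' ∈ 𝒯, T ≠ T' → Disjoint T T')
    (hTX : ∀ T ∈ 𝒯, Disjoint T X)
    {T₁ T₂ S₁ S₂ : Finset V} (hT₁ : T₁ ∈ 𝒯) (hT₂ : T₂ ∈ 𝒯) (hT₁₂ : T₁ ≠ T₂) {x : V}
    (hS₁ : (G.induce ((T₁ : Set V)ᶜ \ S₁)).IsAcyclic) (hXS₁ : X \ S₁ = {x})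
    (hS₁T₂ : Disjoint S₁ T₂)
    (hS₂ : (G.induce ((T₂ : Set V)ᶜ \ S₂)).IsAcyclic) (hXS₂ : X \ S₂ = {x}) :
    IsFVS G ↑S₂ := by
  obtain ⟨hxX, hxS₁⟩ := Finset.mem_sdiff.mp (hXS₁ ▸ Finset.mem_singleton_self x)
  have hxT : ∀ T ∈ 𝒯, x ∉ T := fun T hT hxT => Finset.disjoint_left.mp (hTX T hT) hxT hxX
  refine isAcyclic_induce_of_adj_closed_insert (x := x) (T := ↑T₂) (hxT T₂ hT₂) ?_ ?_ ?_
  · intro y hy z hz hyz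
    rcases hnbr T₂ hT₂ y hy z hyz with hzT | hzX
    · exact Set.mem_insert_of_mem _ hzT
    · have : z ∈ X \ S₂ := Finset.mem_sdiff.mpr ⟨hzX, hz⟩
      rw [hXS₂, Finset.mem_singleton] at this
      exact this ▸ Set.mem_insert z _
  · refine hS₁.embedding (G.induceHomOfLE fun v hv => ?_)
    obtain ⟨-, rfl | hvT₂⟩ := hv
    · exact ⟨hxT T₁ hT₁, hxS₁⟩
    · exact ⟨Finset.disjoint_right.mp (hdisj T₁ hT₁ T₂ hT₂ hT₁₂) hvT₂,
        Finset.disjoint_right.mp hS₁T₂ hvT₂⟩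
  · exact hS₂.embedding (G.induceHomOfLE fun v hv => (Set.mem_sdiff v).mpr ⟨hv.2, hv.1⟩)

theorem exists_minFVSOn_univ_eq_minFVSOn_compl {M : Finset V} (hM : IsFVS G ↑M)
    (hnbr : ∀ T ∈ 𝒯, ∀ y ∈ T, ∀ z, G.Adj y z → z ∈ T ∨ z ∈ X)
    (hacyc : ∀ T ∈ 𝒯, (G.induce (T : Set V)).IsAcyclic)
    (hconn : ∀ T ∈ 𝒯, (G.induce (T : Set V)).Connected)
    (hdisj : ∀ T ∈ 𝒯, ∀ T' ∈ 𝒯, T ≠ T' → Disjoint T T')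
    (hadj : ∀ T ∈ 𝒯, ∀ x ∈ X, ∃ u ∈ T, G.Adj x u)
    (hTX : ∀ T ∈ 𝒯, Disjoint T X) (hcard : X.card + 2 ≤ 𝒯.card) :
    ∃ T ∈ 𝒯, minFVSOn G Set.univ = minFVSOn G (↑T)ᶜ := by
  by_contra! hne
  have hsmall : ∀ T : 𝒯, ∃ (x : V) (S : Finset V), (G.induce ((T : Set V)ᶜ \ S)).IsAcyclic ∧
      S.card < minFVSOn G Set.univ ∧ X \ S = {x} ∧ Disjoint S (𝒯.biUnion id) := by
    rintro ⟨T, hT⟩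
    obtain ⟨S, hS, hSG⟩ := exists_card_lt_minFVSOn_univ hM (hne T hT).symm
    obtain ⟨x, hx, hSU⟩ := exists_sdiff_eq_singleton_of_card_lt_minFVSOn hnbr hacyc hconn hdisj
      hadj hTX hcard hT hS hSG
    exact ⟨x, S, hS, hSG, hx, hSU⟩
  choose x S hS hSG hXS hSU using hsmall
  obtain ⟨T₁, -, T₂, -, hT₁₂, hx⟩ := Finset.exists_ne_map_eq_of_card_lt_of_maps_to
    (s := 𝒯.attach) (t := X) (f := x) (by rw [Finset.card_attach]; omega)
    fun T _ => (Finset.mem_sdiff.mp (hXS T ▸ Finset.mem_singleton_self _)).1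
  have hS₂ := isFVS_of_sdiff_eq_singleton hnbr hdisj hTX T₁.2 T₂.2
    (Subtype.coe_ne_coe.mpr hT₁₂) (hS T₁) (hXS T₁)
    ((Finset.disjoint_biUnion_right _ _ _).mp (hSU T₁) T₂ T₂.2) (hS T₂) (hx ▸ hXS T₂)
  exact (minFVSOn_univ_le hS₂).not_gt (hSG T₂)

end TwinComponents

theorem stmt16_general {V : Type*} (G : SimpleGraph V) [DecidableRel G.Adj]
    (M : Finset V) (hM : IsFVS G ↑M)
    (X : Finset V) (hX : X ⊆ M)
    (𝒯 : Finset (Finset V)) (hcard : X.card + 2 ≤ 𝒯.card)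
    (hTM : ∀ T ∈ 𝒯, Disjoint T M)
    (hconn : ∀ T ∈ 𝒯, (G.induce (T : Set V)).Connected)
    (hclosed : ∀ T ∈ 𝒯, ∀ v ∈ T, ∀ w : V, G.Adj v w → w ∈ M ∨ w ∈ T)
    (hdisj : ∀ T ∈ 𝒯, ∀ T' ∈ 𝒯, T ≠ T' → Disjoint T T')
    (hnbhd : ∀ T ∈ 𝒯, M.filter (fun x => ∃ v ∈ T, G.Adj x v) = X) :
    ∃ T ∈ 𝒯, minFVSOn G Set.univ = minFVSOn G (↑T)ᶜ := by
  classical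
  refine exists_minFVSOn_univ_eq_minFVSOn_compl hM (fun T hT y hy z hyz => ?_)
    (fun T hT => ?_) hconn hdisj (fun T hT x hx => ?_) (fun T hT => (hTM T hT).mono_right hX) hcard
  · refine (hclosed T hT y hy z hyz).symm.imp_right fun hzM => ?_
    exact hnbhd T hT ▸ Finset.mem_filter.mpr ⟨hzM, y, hy, hyz.symm⟩
  · exact hM.embedding
      (G.induceHomOfLE (Finset.disjoint_coe.mpr (hTM T hT)).subset_compl_right)
  · rw [← hnbhd T hT, Finset.mem_filter] at hx
    exact hx.2

/-- Let `M` be a feedback vertex set of `G`, `X ⊆ M` nonempty, and `𝒯` a family of at least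
`|X| + 2` pairwise disjoint connected vertex subsets of `G - M`, each the vertex set of a
connected component of `G - M`, all with neighborhood exactly `X` in `M`. Then some `T ∈ 𝒯`
can be removed without changing the minimum feedback vertex set size. -/
theorem stmt16 {V : Type*} [DecidableEq V] (G : SimpleGraph V) [DecidableRel G.Adj]
    (M : Finset V) (hM : IsFVS G ↑M)
    (X : Finset V) (hX : X ⊆ M) (hX1 : 1 ≤ X.card)
    (𝒯 : Finset (Finset V)) (hcard : X.card + 2 ≤ 𝒯.card)
    (hTM : ∀ T ∈ 𝒯, Disjoint T M)
    (hconn : ∀ T ∈ 𝒯, (G.induce (T : Set V)).Connected)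
    (hclosed : ∀ T ∈ 𝒯, ∀ v ∈ T, ∀ w : V, G.Adj v w → w ∈ M ∨ w ∈ T)
    (hdisj : ∀ T ∈ 𝒯, ∀ T' ∈ 𝒯, T ≠ T' → Disjoint T T')
    (hnbhd : ∀ T ∈ 𝒯, M.filter (fun x => ∃ v ∈ T, G.Adj x v) = X) :
    ∃ T ∈ 𝒯, minFVSOn G Set.univ = minFVSOn G (↑T)ᶜ :=
  stmt16_general G M hM X hX 𝒯 hcard hTM hconn hclosed hdisj hnbhd
end

section
/- Let G be a graph, M a feedback vertex set, X ⊆ M with |X \ S| ≥ 2 for some feedback vertex set S of G, and let 𝒯 be a family of pairwise disjoint, pairwise non-adjacent connected vertex subsets of G − M each with X ⊆ N(T). Then S intersects all members of 𝒯 except at most one. -/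
/-!
If `T₁ ≠ T₂` both avoid `S`, pick `x₁ ≠ x₂` in `X \ S` and neighbours `u₁ ∈ T₁`, `u₂ ∈ T₂` of
`x₁`. In `G - S - x₁` the vertices `u₁` and `u₂` are joined through `T₁`, `x₂` and `T₂`
(neither `T` meets `X ⊆ M`); with `x₁` this closes a cycle in the forest `G - S` unless
`u₁ = u₂`, which the disjointness of `T₁` and `T₂` forbids.
-/

open SimpleGraph Finset

namespace SimpleGraph

variable {V : Type*} {G : SimpleGraph V}

lemma IsAcyclic.eq_of_adj_of_walk_avoiding (hG : G.IsAcyclic) {x u u' : V}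
    (hu : G.Adj x u) (hu' : G.Adj x u') (p : G.Walk u u') (hx : x ∉ p.support) : u = u' := by
  classical
  have hx' : x ∉ p.bypass.support := fun h => hx (p.support_bypass_subset_support h)
  have hpath : (Walk.cons hu p.bypass).IsPath := p.bypass_isPath.cons hx'
  simpa using (hG.eq_snd_of_adj_start hpath hu' (by simp)).symm

lemma eq_of_adj_of_reachable_induce_diff_singleton {s : Set V} (hs : (G.induce s).IsAcyclic)
    {x u u' : V} (hx : x ∈ s) (hu : u ∈ s \ {x}) (hu' : u' ∈ s \ {x})
    (hxu : G.Adj x u) (hxu' : G.Adj x u')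
    (h : (G.induce (s \ {x})).Reachable ⟨u, hu⟩ ⟨u', hu'⟩) : u = u' := by
  obtain ⟨p⟩ := h
  have hx_notMem : (⟨x, hx⟩ : s) ∉ (p.map (G.induceHomOfLE Set.sdiff_subset).toHom).support := by
    intro h
    obtain ⟨y, -, hy⟩ := List.mem_map.mp (Walk.support_map _ p ▸ h)
    exact y.2.2 (congrArg Subtype.val hy)
  exact congrArg Subtype.val (hs.eq_of_adj_of_walk_avoiding (x := ⟨x, hx⟩) (u := ⟨u, hu.1⟩)
    (u' := ⟨u', hu'.1⟩) hxu hxu' _ hx_notMem)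

lemma reachable_induce_of_preconnected_induce {s T : Set V} (hTs : T ⊆ s)
    (hT : (G.induce T).Preconnected) {a b : V} (ha : a ∈ T) (hb : b ∈ T) :
    (G.induce s).Reachable ⟨a, hTs ha⟩ ⟨b, hTs hb⟩ :=
  (hT ⟨a, ha⟩ ⟨b, hb⟩).map (G.induceHomOfLE hTs).toHom

end SimpleGraph

theorem stmt18_general {V : Type*} [DecidableEq V] (G : SimpleGraph V)
    (M : Finset V)
    (X : Finset V) (hX : X ⊆ M)
    (S : Finset V) (hS : IsFVS G ↑S) (hXS : 2 ≤ (X \ S).card)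
    (𝒯 : Finset (Finset V))
    (hTM : ∀ T ∈ 𝒯, Disjoint T M)
    (hconn : ∀ T ∈ 𝒯, (G.induce (T : Set V)).Connected)
    (hdisj : ∀ T ∈ 𝒯, ∀ T' ∈ 𝒯, T ≠ T' → Disjoint T T')
    (hnb : ∀ T ∈ 𝒯, ∀ x ∈ X, ∃ v ∈ T, G.Adj x v) :
    ∀ T₁ ∈ 𝒯, ∀ T₂ ∈ 𝒯, T₁ ∩ S = ∅ → T₂ ∩ S = ∅ → T₁ = T₂ := by
  intro T₁ hT₁ T₂ hT₂ hS₁ hS₂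
  by_contra hne
  obtain ⟨x₁, hx₁, x₂, hx₂, hx₁₂⟩ := Finset.one_lt_card.mp (by omega : 1 < (X \ S).card)
  rw [Finset.mem_sdiff] at hx₁ hx₂
  set s : Set V := (↑S : Set V)ᶜ \ {x₁}
  have hsub : ∀ T ∈ 𝒯, T ∩ S = ∅ → (↑T : Set V) ⊆ s := fun T hT hTS t ht =>
    ⟨fun htS => by simpa [hTS] using Finset.mem_inter.mpr ⟨ht, htS⟩,
      fun htx => Finset.disjoint_left.mp (hTM T hT) ht (hX (htx ▸ hx₁.1))⟩
  have hx₂s : x₂ ∈ s := ⟨hx₂.2, hx₁₂.symm⟩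
  obtain ⟨u₁, hu₁, hxu₁⟩ := hnb T₁ hT₁ x₁ hx₁.1
  obtain ⟨u₂, hu₂, hxu₂⟩ := hnb T₂ hT₂ x₁ hx₁.1
  obtain ⟨v₁, hv₁, hxv₁⟩ := hnb T₁ hT₁ x₂ hx₂.1
  obtain ⟨v₂, hv₂, hxv₂⟩ := hnb T₂ hT₂ x₂ hx₂.1
  have hT₁s := hsub T₁ hT₁ hS₁
  have hT₂s := hsub T₂ hT₂ hS₂
  have hreach : (G.induce s).Reachable ⟨u₁, hT₁s hu₁⟩ ⟨u₂, hT₂s hu₂⟩ :=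
    have hv₁x₂ : (G.induce s).Adj ⟨v₁, hT₁s hv₁⟩ ⟨x₂, hx₂s⟩ := hxv₁.symm
    have hx₂v₂ : (G.induce s).Adj ⟨x₂, hx₂s⟩ ⟨v₂, hT₂s hv₂⟩ := hxv₂
    (reachable_induce_of_preconnected_induce hT₁s (hconn T₁ hT₁).preconnected hu₁ hv₁).trans <|
      hv₁x₂.reachable.trans <| hx₂v₂.reachable.trans <|
        reachable_induce_of_preconnected_induce hT₂s (hconn T₂ hT₂).preconnected hv₂ hu₂
  have hu : u₁ = u₂ := eq_of_adj_of_reachable_induce_diff_singleton hS hx₁.2 _ _ hxu₁ hxu₂ hreach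
  exact Finset.disjoint_left.mp (hdisj T₁ hT₁ T₂ hT₂ hne) hu₁ (hu ▸ hu₂)

/-- Let `M` be a feedback vertex set of `G`, `S` a feedback vertex set with `|X \ S| ≥ 2` for
some `X ⊆ M`, and `𝒯` a family of pairwise disjoint, pairwise non-adjacent connected vertex
subsets of `G - M` each with `X ⊆ N(T)`. Then `S` intersects all members of `𝒯` except at
most one (i.e. at most one member of `𝒯` is disjoint from `S`). -/
theorem stmt18 {V : Type*} [DecidableEq V] (G : SimpleGraph V)
    (M : Finset V) (hM : IsFVS G ↑M)
    (X : Finset V) (hX : X ⊆ M)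
    (S : Finset V) (hS : IsFVS G ↑S) (hXS : 2 ≤ (X \ S).card)
    (𝒯 : Finset (Finset V))
    (hTM : ∀ T ∈ 𝒯, Disjoint T M)
    (hconn : ∀ T ∈ 𝒯, (G.induce (T : Set V)).Connected)
    (hdisj : ∀ T ∈ 𝒯, ∀ T' ∈ 𝒯, T ≠ T' → Disjoint T T')
    (hnonadj : ∀ T ∈ 𝒯, ∀ T' ∈ 𝒯, T ≠ T' → ∀ u ∈ T, ∀ v ∈ T', ¬ G.Adj u v)
    (hnb : ∀ T ∈ 𝒯, ∀ x ∈ X, ∃ v ∈ T, G.Adj x v) :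
    ∀ T₁ ∈ 𝒯, ∀ T₂ ∈ 𝒯, T₁ ∩ S = ∅ → T₂ ∩ S = ∅ → T₁ = T₂ :=
  stmt18_general G M X hX S hS hXS 𝒯 hTM hconn hdisj hnb
end
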